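/- arXiv:1106.0997 — 2 statements merged into one kernel-verified Lean document; each statement's English description precedes it below -/
import Mathlib

section
/- Let N ≥ 2, α ∈ (0,2), β := 2(α−1)/α, κ_α := 2^{1−α}Γ(1−α/2)/Γ(α/2), Ω^# ⊂ ℝ^N the open ball of measure |Ω| centered at the origin, and f a measurable function on a bounded open set Ω with |Ω| = |Ω^#|. Let v(x,z) be of class C² on C_{Ω^#} := Ω^# × (0,∞), continuous on the closure, radially symmetric and radially nonincreasing in x for each z ≥ 0, satisfying z^β ∂²_z v + Δ_x v = 0 in C_{Ω^#} and v = 0 on ∂Ω^# × [0,∞). Then V(s,z) := ∫_0^s v*(σ,z) dσ satisfies z^β ∂²V/∂z² + N² ω_N^{2/N} s^{2−2/N} ∂²V/∂s² = 0 for all s ∈ (0,|Ω|) and z ∈ (0,∞). If moreover lim_{z→0⁺} ∂_z v(x,z) = −α^{α−1} κ_α f^#(x) uniformly in x ∈ Ω^#, then lim_{z→0⁺} ∂V/∂z(s,z) = −α^{α−1} κ_α ∫_0^s f*(σ) dσ for every s ∈ (0,|Ω|). -/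
/-!
Write `ρ(σ) = (σ / ω_N)^{1/N}` for the radius of the centered ball of volume `σ` and
`P(σ) = N ω_N ρ(σ)^{N-1}` for its perimeter, so that `P ρ' = 1`, `P' = (N - 1) / ρ` and
`P(s)² = N² ω_N^{2/N} s^{2-2/N}`. A radial, radially nonincreasing `v` vanishing on the boundary
is nonnegative and is its own rearrangement: `v*(σ, z) = u(ρ(σ), z)` with `u(ρ, z) = v(ρ e, z)`.
Hence `∂²_z V(s, z) = ∫_0^s ∂²_z u(ρ(σ), z) dσ` and `∂²_s V(s, z) = ∂_ρ u(ρ(s), z) / P(s)`.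
By the equation, `z^β ∂²_z u = -(∂²_ρ u + (N - 1) ∂_ρ u / ρ)`, and since `P ρ' = 1` the right-hand
side is `-d/dσ [P(σ) ∂_ρ u(ρ(σ), z)]`; integrating gives `z^β ∂²_z V = -P(s) ∂_ρ u(ρ(s), z)`,
which is the equation for `V`. For the boundary limit, `∂_z V(s, z) = ∫_0^s ∂_z v(ρ(σ) e, z) dσ`
and the integrand converges uniformly on `[0, s]`, to the continuous limit `-α^{α-1} κ_α f*`.
-/

open MeasureTheory Filter Set

noncomputable section

abbrev Euc (N : ℕ) := EuclideanSpace ℝ (Fin N)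

/-- Decreasing rearrangement of `g` on `E`:
`g*(s) = sup {t ≥ 0 : |{x ∈ E : |g x| > t}| > s}`. -/
def rearr {N : ℕ} (E : Set (Euc N)) (g : Euc N → ℝ) (s : ℝ) : ℝ :=
  sSup {t : ℝ | 0 ≤ t ∧ ENNReal.ofReal s < volume {x | x ∈ E ∧ t < |g x|}}

/-- Measure of the unit ball of `ℝ^N`. -/
def omegaN (N : ℕ) : ℝ := (volume (Metric.ball (0 : Euc N) 1)).toReal

/-- Radius of the ball centered at the origin with the same measure as `Ω`. -/
def ballRad {N : ℕ} (Ω : Set (Euc N)) : ℝ := ((volume Ω).toReal / omegaN N) ^ ((N : ℝ)⁻¹)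

/-- `Ω^#`: the ball centered at the origin with the same measure as `Ω`. -/
def symmBall {N : ℕ} (Ω : Set (Euc N)) : Set (Euc N) := Metric.ball 0 (ballRad Ω)

/-- Schwarz rearrangement `f^#(x) = f*(ω_N |x|^N)`. -/
def schwarz {N : ℕ} (Ω : Set (Euc N)) (f : Euc N → ℝ) (x : Euc N) : ℝ :=
  rearr Ω f (omegaN N * ‖x‖ ^ N)

/-- `κ_α = 2^{1-α} Γ(1-α/2) / Γ(α/2)`. -/
def kappa (α : ℝ) : ℝ := (2 : ℝ) ^ (1 - α) * Real.Gamma (1 - α / 2) / Real.Gamma (α / 2)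

/-- Laplacian of `v` with respect to the `x` variables. -/
def lapx {N : ℕ} (v : Euc N → ℝ → ℝ) (x : Euc N) (z : ℝ) : ℝ :=
  ∑ i : Fin N, deriv (deriv fun t : ℝ => v (x + t • EuclideanSpace.single i (1 : ℝ)) z) 0

/-- `v` is radially symmetric and radially nonincreasing in `x` for each `z ≥ 0`. -/
def RadialDecr {N : ℕ} (v : Euc N → ℝ → ℝ) : Prop :=
  ∀ z : ℝ, 0 ≤ z → ∀ x x' : Euc N, ‖x‖ ≤ ‖x'‖ → v x' z ≤ v x z

open Metric
open scoped Topology Interval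

section VolumeRadius

variable {N : ℕ}

lemma omegaN_pos (hN : 0 < N) : 0 < omegaN N := by
  have : Nonempty (Fin N) := ⟨⟨0, hN⟩⟩
  exact ENNReal.toReal_pos (Metric.measure_ball_pos volume _ one_pos).ne' measure_ball_lt_top.ne

lemma volume_ball_zero (hN : 0 < N) {R : ℝ} (hR : 0 ≤ R) :
    volume (ball (0 : Euc N) R) = ENNReal.ofReal (omegaN N * R ^ N) := by
  have : Nonempty (Fin N) := ⟨⟨0, hN⟩⟩
  rw [Measure.addHaar_ball _ _ hR, finrank_euclideanSpace_fin,
    ENNReal.ofReal_mul (omegaN_pos hN).le, mul_comm, omegaN,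
    ENNReal.ofReal_toReal measure_ball_lt_top.ne]

lemma volume_closedBall_zero (hN : 0 < N) {R : ℝ} (hR : 0 ≤ R) :
    volume (closedBall (0 : Euc N) R) = ENNReal.ofReal (omegaN N * R ^ N) := by
  have : Nonempty (Fin N) := ⟨⟨0, hN⟩⟩
  rw [← volume_ball_zero hN hR, Measure.addHaar_closedBall_eq_addHaar_ball]

def volRadius (N : ℕ) (σ : ℝ) : ℝ := (σ / omegaN N) ^ (N : ℝ)⁻¹

lemma volRadius_nonneg (hN : 0 < N) {σ : ℝ} (hσ : 0 ≤ σ) : 0 ≤ volRadius N σ :=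
  Real.rpow_nonneg (div_nonneg hσ (omegaN_pos hN).le) _

lemma volRadius_pos (hN : 0 < N) {σ : ℝ} (hσ : 0 < σ) : 0 < volRadius N σ :=
  Real.rpow_pos_of_pos (div_pos hσ (omegaN_pos hN)) _

lemma volRadius_zero (hN : 0 < N) : volRadius N 0 = 0 := by
  rw [volRadius, zero_div, Real.zero_rpow (by positivity)]

lemma omegaN_mul_volRadius_pow (hN : 0 < N) {σ : ℝ} (hσ : 0 ≤ σ) :
    omegaN N * volRadius N σ ^ N = σ := by
  rw [volRadius, Real.rpow_inv_natCast_pow (div_nonneg hσ (omegaN_pos hN).le) hN.ne',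
    mul_div_cancel₀ _ (omegaN_pos hN).ne']

lemma continuous_volRadius (hN : 0 < N) : Continuous (volRadius N) :=
  (continuous_id.div_const _).rpow_const fun _ => Or.inr (by positivity)

lemma volRadius_le_volRadius (hN : 0 < N) {σ τ : ℝ} (hσ : 0 ≤ σ) (h : σ ≤ τ) :
    volRadius N σ ≤ volRadius N τ := by
  have := omegaN_pos hN
  exact Real.rpow_le_rpow (by positivity) (by gcongr) (by positivity)

lemma volRadius_lt_volRadius (hN : 0 < N) {σ τ : ℝ} (hσ : 0 ≤ σ) (h : σ < τ) :
    volRadius N σ < volRadius N τ := by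
  have := omegaN_pos hN
  exact Real.rpow_lt_rpow (by positivity) (by gcongr) (by positivity)

/-- The perimeter of the centered ball of volume `σ`. -/
def ballPerimeter (N : ℕ) (σ : ℝ) : ℝ := N * omegaN N * volRadius N σ ^ (N - 1)

lemma ballPerimeter_pos (hN : 0 < N) {σ : ℝ} (hσ : 0 < σ) : 0 < ballPerimeter N σ := by
  have := omegaN_pos hN
  have := volRadius_pos hN hσ
  simp only [ballPerimeter]
  positivity

lemma ballPerimeter_zero (hN : 2 ≤ N) : ballPerimeter N 0 = 0 := by
  rw [ballPerimeter, volRadius_zero (by omega), zero_pow (by omega), mul_zero]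

lemma hasDerivAt_volRadius (hN : 0 < N) {σ : ℝ} (hσ : 0 < σ) :
    HasDerivAt (volRadius N) (ballPerimeter N σ)⁻¹ σ := by
  have hpow : HasDerivAt (fun ρ => omegaN N * ρ ^ N) (ballPerimeter N σ) (volRadius N σ) :=
    ((hasDerivAt_pow N (volRadius N σ)).const_mul (omegaN N)).congr_deriv
      (by simp only [ballPerimeter]; ring)
  refine hpow.of_local_left_inverse (continuous_volRadius hN).continuousAt
    (ballPerimeter_pos hN hσ).ne' ?_
  filter_upwards [lt_mem_nhds hσ] with τ hτ using omegaN_mul_volRadius_pow hN hτ.le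

lemma hasDerivAt_ballPerimeter (hN : 0 < N) {σ : ℝ} (hσ : 0 < σ) :
    HasDerivAt (ballPerimeter N) ((N - 1) / volRadius N σ) σ := by
  have hd : HasDerivAt (fun τ => (N : ℝ) * omegaN N * volRadius N τ ^ (N - 1)) _ σ :=
    ((hasDerivAt_volRadius hN hσ).pow (N - 1)).const_mul _
  refine hd.congr_deriv ?_
  have := omegaN_pos hN
  have := volRadius_pos hN hσ
  obtain ⟨k, rfl⟩ : ∃ k, N = k + 1 := ⟨N - 1, by omega⟩
  rcases k with _ | j
  · simp
  · simp only [ballPerimeter, Nat.add_sub_cancel, Nat.cast_add, Nat.cast_one]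
    field_simp
    ring

lemma ballPerimeter_sq (hN : 0 < N) {σ : ℝ} (hσ : 0 < σ) :
    ballPerimeter N σ ^ 2 = N ^ 2 * omegaN N ^ (2 / (N : ℝ)) * σ ^ (2 - 2 / (N : ℝ)) := by
  have hω := omegaN_pos hN
  have hρ := volRadius_pos hN hσ
  rw [ballPerimeter]
  set ρ := volRadius N σ
  have hω2 : omegaN N ^ (2 / (N : ℝ)) * omegaN N ^ (2 - 2 / (N : ℝ)) = omegaN N ^ 2 := by
    rw [← Real.rpow_add hω, add_sub_cancel, Real.rpow_two]
  have hρ2 : ρ ^ ((N : ℝ) * (2 - 2 / (N : ℝ))) = (ρ ^ (N - 1)) ^ 2 := by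
    rw [← pow_mul, ← Real.rpow_natCast, Nat.cast_mul, Nat.cast_sub (by omega)]
    congr 1
    field_simp
    push_cast
    ring
  rw [← omegaN_mul_volRadius_pow hN hσ.le, Real.mul_rpow hω.le (by positivity),
    ← Real.rpow_natCast ρ N, ← Real.rpow_mul hρ.le, hρ2]
  linear_combination (-(N ^ 2 * (ρ ^ (N - 1)) ^ 2) : ℝ) * hω2

end VolumeRadius

section Rearrangement

variable {N : ℕ}

lemma norm_smul_of_norm_eq_one {e : Euc N} (he : ‖e‖ = 1) {c : ℝ} (hc : 0 ≤ c) :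
    ‖c • e‖ = c := by
  rw [norm_smul, he, Real.norm_eq_abs, abs_of_nonneg hc, mul_one]

lemma rearr_ball_of_radial (hN : 0 < N) {r : ℝ} {g : Euc N → ℝ}
    (hmono : ∀ x x' : Euc N, ‖x‖ ≤ ‖x'‖ → g x' ≤ g x)
    (hcont : ContinuousOn g (ball 0 r)) (hnonneg : ∀ x ∈ ball 0 r, 0 ≤ g x)
    {e : Euc N} (he : ‖e‖ = 1) {ρ : ℝ} (hρ : 0 ≤ ρ) (hρr : ρ < r) :
    rearr (ball 0 r) g (omegaN N * ρ ^ N) = g (ρ • e) := by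
  have hρe : ρ • e ∈ ball (0 : Euc N) r := by
    rwa [mem_ball_zero_iff, norm_smul_of_norm_eq_one he hρ]
  have hlevel : {t : ℝ | 0 ≤ t ∧ ENNReal.ofReal (omegaN N * ρ ^ N) <
      volume {x | x ∈ ball (0 : Euc N) r ∧ t < |g x|}} = Ico 0 (g (ρ • e)) := by
    ext t
    simp only [mem_ofPred_eq, mem_Ico, and_congr_right_iff]
    intro ht
    constructor
    · intro hvol
      by_contra! hle
      have hsub : {x | x ∈ ball (0 : Euc N) r ∧ t < |g x|} ⊆ ball 0 ρ := by
        rintro x ⟨hxr, hxt⟩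
        rw [abs_of_nonneg (hnonneg x hxr)] at hxt
        by_contra hxρ
        refine (hxt.trans_le ((hmono _ x ?_).trans hle)).false
        rw [norm_smul_of_norm_eq_one he hρ]
        simpa using hxρ
      exact (hvol.trans_le ((measure_mono hsub).trans_eq (volume_ball_zero hN hρ))).false
    · intro hlt
      have hcont_ray : ContinuousAt (fun c : ℝ => g (c • e)) ρ :=
        (hcont.continuousAt (Metric.isOpen_ball.mem_nhds hρe)).comp (x := ρ)
          (continuous_id.smul continuous_const).continuousAt
      obtain ⟨ρ', hρ't, hρ'ρ, hρ'r⟩ :=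
        (((hcont_ray.eventually (lt_mem_nhds hlt)).filter_mono nhdsWithin_le_nhds).and
          (Ioo_mem_nhdsGT hρr)).exists
      have hρ'0 : 0 ≤ ρ' := hρ.trans hρ'ρ.le
      have hsub : closedBall (0 : Euc N) ρ' ⊆
          {x | x ∈ ball (0 : Euc N) r ∧ t < |g x|} := by
        intro x hx
        rw [mem_closedBall_zero_iff] at hx
        refine ⟨mem_ball_zero_iff.2 (hx.trans_lt hρ'r), hρ't.trans_le ?_⟩
        exact (hmono x _ (by rwa [norm_smul_of_norm_eq_one he hρ'0])).trans (le_abs_self _)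
      refine lt_of_lt_of_le ?_ (measure_mono hsub)
      rw [volume_closedBall_zero hN hρ'0, ENNReal.ofReal_lt_ofReal_iff (by
        have := omegaN_pos hN; have := hρ.trans_lt hρ'ρ; positivity)]
      gcongr
      exact omegaN_pos hN
  rw [rearr, hlevel]
  rcases (hnonneg _ hρe).eq_or_lt with h | h
  · rw [← h, Ico_self, Real.sSup_empty]
  · exact csSup_Ico h

end Rearrangement

section PartialDeriv

variable {F : ℝ × ℝ → ℝ}

def partialFst (F : ℝ × ℝ → ℝ) (p : ℝ × ℝ) : ℝ := fderiv ℝ F p (1, 0)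

def partialSnd (F : ℝ × ℝ → ℝ) (p : ℝ × ℝ) : ℝ := fderiv ℝ F p (0, 1)

lemma ContDiffOn.hasDerivAt_partialFst {U : Set (ℝ × ℝ)} {n : WithTop ℕ∞}
    (hF : ContDiffOn ℝ n F U) (hU : IsOpen U) (hn : n ≠ 0) {a b : ℝ} (hab : (a, b) ∈ U) :
    HasDerivAt (fun t => F (t, b)) (partialFst F (a, b)) a :=
  ((hF.contDiffAt (hU.mem_nhds hab)).differentiableAt hn).hasFDerivAt.comp_hasDerivAt a
    ((hasDerivAt_id a).prodMk (hasDerivAt_const a b))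

lemma ContDiffOn.hasDerivAt_partialSnd {U : Set (ℝ × ℝ)} {n : WithTop ℕ∞}
    (hF : ContDiffOn ℝ n F U) (hU : IsOpen U) (hn : n ≠ 0) {a b : ℝ} (hab : (a, b) ∈ U) :
    HasDerivAt (fun t => F (a, t)) (partialSnd F (a, b)) b :=
  ((hF.contDiffAt (hU.mem_nhds hab)).differentiableAt hn).hasFDerivAt.comp_hasDerivAt b
    ((hasDerivAt_const b a).prodMk (hasDerivAt_id b))

lemma contDiffOn_partialFst {U : Set (ℝ × ℝ)} {m n : WithTop ℕ∞}
    (hF : ContDiffOn ℝ n F U) (hU : IsOpen U) (hmn : m + 1 ≤ n) :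
    ContDiffOn ℝ m (partialFst F) U :=
  (ContinuousLinearMap.apply ℝ ℝ ((1 : ℝ), (0 : ℝ))).contDiff.comp_contDiffOn
    (hF.fderiv_of_isOpen hU hmn)

lemma contDiffOn_partialSnd {U : Set (ℝ × ℝ)} {m n : WithTop ℕ∞}
    (hF : ContDiffOn ℝ n F U) (hU : IsOpen U) (hmn : m + 1 ≤ n) :
    ContDiffOn ℝ m (partialSnd F) U :=
  (ContinuousLinearMap.apply ℝ ℝ ((0 : ℝ), (1 : ℝ))).contDiff.comp_contDiffOn
    (hF.fderiv_of_isOpen hU hmn)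

lemma ContinuousOn.comp_prodMk_const {S T : Set ℝ} (hF : ContinuousOn F (S ×ˢ T))
    {γ : ℝ → ℝ} {I : Set ℝ} (hγ : ContinuousOn γ I) (hγS : MapsTo γ I S) {t : ℝ}
    (ht : t ∈ T) :
    ContinuousOn (fun σ => F (γ σ, t)) I :=
  hF.comp (hγ.prodMk continuousOn_const) fun _ hσ => ⟨hγS hσ, ht⟩

theorem hasDerivAt_intervalIntegral_comp_prodMk {F' : ℝ × ℝ → ℝ} {S T : Set ℝ}
    {γ : ℝ → ℝ} {a b z : ℝ} (hab : a ≤ b) (hT : IsOpen T) (hz : z ∈ T)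
    (hγ : ContinuousOn γ (Icc a b)) (hγS : MapsTo γ (Icc a b) S) (hF : ContinuousOn F (S ×ˢ T))
    (hF' : ContinuousOn F' (S ×ˢ T))
    (hderiv : ∀ x ∈ S, ∀ y ∈ T, HasDerivAt (fun t => F (x, t)) (F' (x, y)) y) :
    HasDerivAt (fun t => ∫ σ in a..b, F (γ σ, t)) (∫ σ in a..b, F' (γ σ, z)) z := by
  obtain ⟨δ, hδ, hδT⟩ := Metric.nhds_basis_closedBall.mem_iff.1 (hT.mem_nhds hz)
  have hK : IsCompact ((γ '' Icc a b) ×ˢ closedBall z δ) :=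
    (isCompact_Icc.image_of_continuousOn hγ).prod (isCompact_closedBall z δ)
  obtain ⟨C, hC⟩ := hK.exists_bound_of_continuousOn (hF'.mono (prod_mono
    (image_subset_iff.2 hγS) hδT))
  have hIoc : Ι a b ⊆ Icc a b := by
    rw [uIoc_of_le hab]
    exact Ioc_subset_Icc_self
  refine (intervalIntegral.hasDerivAt_integral_of_dominated_loc_of_deriv_le
    (F := fun t σ => F (γ σ, t)) (F' := fun t σ => F' (γ σ, t)) (bound := fun _ => C)
    (ball_mem_nhds z hδ) ?_ ?_ ?_ ?_ intervalIntegrable_const ?_).2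
  · filter_upwards [hT.mem_nhds hz] with t ht
    exact ((hF.comp_prodMk_const hγ hγS ht).mono hIoc).aestronglyMeasurable measurableSet_uIoc
  · exact (hF.comp_prodMk_const hγ hγS hz).intervalIntegrable_of_Icc hab
  · exact ((hF'.comp_prodMk_const hγ hγS hz).mono hIoc).aestronglyMeasurable measurableSet_uIoc
  · refine .of_forall fun σ hσ t ht => hC _ ⟨mem_image_of_mem γ (hIoc hσ), ?_⟩
    exact ball_subset_closedBall ht
  · exact .of_forall fun σ hσ t ht =>
      hderiv _ (hγS (hIoc hσ)) t (hδT (ball_subset_closedBall ht))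

end PartialDeriv

section RadialIntegrals

variable {N : ℕ}

lemma mapsTo_volRadius_Icc (hN : 0 < N) {s : ℝ} :
    MapsTo (volRadius N) (Icc 0 s) (Icc 0 (volRadius N s)) := fun _ hσ =>
  ⟨volRadius_nonneg hN hσ.1, volRadius_le_volRadius hN hσ.1 hσ.2⟩

lemma mapsTo_volRadius_Ioo (hN : 0 < N) {r s : ℝ} (hsr : volRadius N s < r) :
    MapsTo (volRadius N) (Icc 0 s) (Ioo (-r) r) := fun σ hσ => by
  have hρ := mapsTo_volRadius_Icc hN hσ
  exact ⟨by linarith [hρ.1, volRadius_nonneg hN (hσ.1.trans hσ.2)], hρ.2.trans_lt hsr⟩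

/-- The divergence theorem on the ball of volume `s`, written in the volume variable `σ`. -/
theorem integral_eq_ballPerimeter_mul_of_radial (hN : 2 ≤ N) {s : ℝ} (hs : 0 ≤ s)
    {w' w'' g : ℝ → ℝ} (hw' : ContinuousOn w' (Icc 0 (volRadius N s)))
    (hw'' : ∀ ρ ∈ Ioo 0 (volRadius N s), HasDerivAt w' (w'' ρ) ρ)
    (hg : IntervalIntegrable g volume 0 s)
    (hgw : ∀ σ ∈ Ioo 0 s,
      g σ = w'' (volRadius N σ) + (N - 1) / volRadius N σ * w' (volRadius N σ)) :
    ∫ σ in 0..s, g σ = ballPerimeter N s * w' (volRadius N s) := by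
  have hN0 : 0 < N := by omega
  have hflux : ∀ σ ∈ Ioo 0 s,
      HasDerivAt (fun τ => ballPerimeter N τ * w' (volRadius N τ)) (g σ) σ := by
    intro σ hσ
    have hρ := volRadius_pos hN0 hσ.1
    have hρs : volRadius N σ < volRadius N s := volRadius_lt_volRadius hN0 hσ.1.le hσ.2
    refine ((hasDerivAt_ballPerimeter hN0 hσ.1).mul
      ((hw'' _ ⟨hρ, hρs⟩).comp σ (hasDerivAt_volRadius hN0 hσ.1))).congr_deriv ?_
    have hP := (ballPerimeter_pos hN0 hσ.1).ne'
    rw [hgw σ hσ, Function.comp_apply]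
    field_simp
    ring
  have hcont : ContinuousOn (fun τ => ballPerimeter N τ * w' (volRadius N τ)) (Icc 0 s) :=
    (continuous_const.mul ((continuous_volRadius hN0).pow _)).continuousOn.mul
      (hw'.comp (continuous_volRadius hN0).continuousOn (mapsTo_volRadius_Icc hN0))
  rw [intervalIntegral.integral_eq_sub_of_hasDerivAt_of_le hs hcont hflux hg,
    ballPerimeter_zero hN, zero_mul, sub_zero]

lemma hasDerivAt_integral_comp_volRadius (hN : 0 < N) {r s : ℝ} {w : ℝ → ℝ}
    (hw : ContinuousOn w (Ioo (-r) r)) (hs : 0 ≤ s) (hsr : volRadius N s < r) :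
    HasDerivAt (fun s' => ∫ σ in 0..s', w (volRadius N σ)) (w (volRadius N s)) s := by
  set O := volRadius N ⁻¹' Ioo (-r) r
  have hO : IsOpen O := isOpen_Ioo.preimage (continuous_volRadius hN)
  have hwO : ContinuousOn (fun σ => w (volRadius N σ)) O :=
    hw.comp (continuous_volRadius hN).continuousOn (mapsTo_preimage _ _)
  have hIcc : Icc 0 s ⊆ O := mapsTo_volRadius_Ioo hN hsr
  have hsO : s ∈ O := hIcc ⟨hs, le_rfl⟩
  refine intervalIntegral.integral_hasDerivAt_right ?_ (hwO.stronglyMeasurableAtFilter hO s hsO)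
    (hwO.continuousAt (hO.mem_nhds hsO))
  exact (hwO.mono hIcc).intervalIntegrable_of_Icc hs

lemma deriv_deriv_integral_comp_volRadius (hN : 0 < N) {r s w₁ : ℝ} {w : ℝ → ℝ}
    (hw : ContinuousOn w (Ioo (-r) r)) (hw₁ : HasDerivAt w w₁ (volRadius N s)) (hs : 0 < s)
    (hsr : volRadius N s < r) :
    deriv (deriv fun s' => ∫ σ in 0..s', w (volRadius N σ)) s =
      w₁ * (ballPerimeter N s)⁻¹ := by
  have hnear : ∀ᶠ s' in 𝓝 s, 0 < s' ∧ volRadius N s' < r :=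
    (lt_mem_nhds hs).and ((continuous_volRadius hN).continuousAt.eventually (gt_mem_nhds hsr))
  have hderiv : deriv (fun s' => ∫ σ in 0..s', w (volRadius N σ)) =ᶠ[𝓝 s]
      fun s' => w (volRadius N s') :=
    hnear.mono fun s' hs' => (hasDerivAt_integral_comp_volRadius hN hw hs'.1.le hs'.2).deriv
  rw [hderiv.deriv_eq]
  exact (hw₁.comp s (hasDerivAt_volRadius hN hs)).deriv

lemma hasDerivAt_integral_volRadius_snd (hN : 0 < N) {u : ℝ × ℝ → ℝ} {r s z : ℝ}
    (hu : ContDiffOn ℝ 1 u (Ioo (-r) r ×ˢ Ioi 0)) (hs : 0 ≤ s) (hsr : volRadius N s < r)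
    (hz : 0 < z) :
    HasDerivAt (fun t => ∫ σ in 0..s, u (volRadius N σ, t))
      (∫ σ in 0..s, partialSnd u (volRadius N σ, z)) z := by
  have hD : IsOpen (Ioo (-r) r ×ˢ Ioi (0 : ℝ)) := isOpen_Ioo.prod isOpen_Ioi
  refine hasDerivAt_intervalIntegral_comp_prodMk hs isOpen_Ioi hz
    (continuous_volRadius hN).continuousOn (mapsTo_volRadius_Ioo hN hsr) hu.continuousOn
    (contDiffOn_partialSnd (m := 0) hu hD le_rfl).continuousOn fun x hx y hy => ?_
  exact hu.hasDerivAt_partialSnd hD one_ne_zero ⟨hx, hy⟩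

lemma deriv_deriv_integral_volRadius_snd (hN : 0 < N) {u : ℝ × ℝ → ℝ} {r s z : ℝ}
    (hu : ContDiffOn ℝ 2 u (Ioo (-r) r ×ˢ Ioi 0)) (hs : 0 ≤ s) (hsr : volRadius N s < r)
    (hz : 0 < z) :
    deriv (deriv fun t => ∫ σ in 0..s, u (volRadius N σ, t)) z =
      ∫ σ in 0..s, partialSnd (partialSnd u) (volRadius N σ, z) := by
  have hD : IsOpen (Ioo (-r) r ×ˢ Ioi (0 : ℝ)) := isOpen_Ioo.prod isOpen_Ioi
  have hderiv : deriv (fun t => ∫ σ in 0..s, u (volRadius N σ, t)) =ᶠ[𝓝 z]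
      fun t => ∫ σ in 0..s, partialSnd u (volRadius N σ, t) :=
    (lt_mem_nhds hz).mono fun t ht =>
      (hasDerivAt_integral_volRadius_snd hN (hu.of_le (by norm_num)) hs hsr ht).deriv
  rw [hderiv.deriv_eq]
  exact (hasDerivAt_integral_volRadius_snd hN
    (contDiffOn_partialSnd (m := 1) hu hD (by norm_num)) hs hsr hz).deriv

end RadialIntegrals

lemma deriv_deriv_comp_sqrt_sq_add_sq {g g' : ℝ → ℝ} {ρ g'' : ℝ} (hρ : 0 < ρ)
    (hg : ∀ᶠ c in 𝓝 ρ, HasDerivAt g (g' c) c) (hg' : HasDerivAt g' g'' ρ) :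
    deriv (deriv fun t => g √(ρ ^ 2 + t ^ 2)) 0 = g' ρ / ρ := by
  set φ : ℝ → ℝ := fun t => √(ρ ^ 2 + t ^ 2)
  have hφ0 : φ 0 = ρ := by simp [φ, Real.sqrt_sq hρ.le]
  have hsum : ∀ t : ℝ, 0 < ρ ^ 2 + t ^ 2 := fun t => by positivity
  have hφpos : ∀ t, 0 < φ t := fun t => Real.sqrt_pos.2 (hsum t)
  have hφ : ∀ t, HasDerivAt φ (t / φ t) t := fun t => by
    refine (((hasDerivAt_pow 2 t).const_add (ρ ^ 2)).sqrt (hsum t).ne').congr_deriv ?_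
    norm_num [φ]
    field_simp
  have hφρ : Tendsto φ (𝓝 0) (𝓝 ρ) := hφ0 ▸ (hφ 0).continuousAt.tendsto
  have hderiv : deriv (fun t => g (φ t)) =ᶠ[𝓝 0] fun t => g' (φ t) * (t / φ t) :=
    (hφρ.eventually hg).mono fun t ht => (ht.comp t (hφ t)).deriv
  rw [hderiv.deriv_eq]
  have hg'φ : HasDerivAt (fun t => g' (φ t)) (g'' * (0 / φ 0)) 0 := (hφ0 ▸ hg').comp 0 (hφ 0)
  have hquot : HasDerivAt (fun t => t / φ t) ((1 * φ 0 - 0 * (0 / φ 0)) / φ 0 ^ 2) 0 :=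
    (hasDerivAt_id 0).div (hφ 0) (hφpos 0).ne'
  rw [(hg'φ.fun_mul hquot).deriv, hφ0]
  field_simp
  ring

section RadialProfile

variable {N : ℕ}

lemma norm_smul_single_add_smul_single {i j : Fin N} (hij : i ≠ j) (a b : ℝ) :
    ‖a • EuclideanSpace.single i (1 : ℝ) + b • EuclideanSpace.single j (1 : ℝ)‖ =
      √(a ^ 2 + b ^ 2) := by
  have horth : inner ℝ (a • EuclideanSpace.single i (1 : ℝ) : Euc N)
      (b • EuclideanSpace.single j (1 : ℝ)) = 0 := by
    simp [real_inner_smul_left, real_inner_smul_right, EuclideanSpace.inner_single_left, hij]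
  rw [← Real.sqrt_sq (norm_nonneg _), norm_add_sq_real, horth]
  simp [norm_smul, sq_abs]

def radialProfile (v : Euc N → ℝ → ℝ) (e : Euc N) (p : ℝ × ℝ) : ℝ :=
  v (p.1 • e) p.2

variable {v : Euc N → ℝ → ℝ} {e : Euc N} {r : ℝ}

lemma contDiffOn_radialProfile {n : WithTop ℕ∞} (he : ‖e‖ = 1)
    (hv : ContDiffOn ℝ n (fun p : Euc N × ℝ => v p.1 p.2) (ball 0 r ×ˢ Ioi 0)) :
    ContDiffOn ℝ n (radialProfile v e) (Ioo (-r) r ×ˢ Ioi 0) := by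
  refine hv.comp ((contDiff_fst.smul contDiff_const).prodMk contDiff_snd).contDiffOn ?_
  rintro ⟨a, b⟩ ⟨ha, hb⟩
  refine ⟨?_, hb⟩
  show a • e ∈ ball 0 r
  rw [mem_ball_zero_iff, norm_smul, he, mul_one, Real.norm_eq_abs, abs_lt]
  exact ha

lemma RadialDecr.apply_eq_radialProfile (hv : RadialDecr v) (he : ‖e‖ = 1) {z : ℝ}
    (hz : 0 ≤ z) (y : Euc N) : v y z = radialProfile v e (‖y‖, z) := by
  have hy : ‖‖y‖ • e‖ = ‖y‖ := norm_smul_of_norm_eq_one he (norm_nonneg y)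
  exact le_antisymm (hv z hz _ y hy.le) (hv z hz y _ hy.ge)

lemma hasDerivAt_radialProfile_snd (he : ‖e‖ = 1)
    (hv : ContDiffOn ℝ 2 (fun p : Euc N × ℝ => v p.1 p.2) (ball 0 r ×ˢ Ioi 0))
    {a b : ℝ} (ha : a ∈ Ioo (-r) r) (hb : 0 < b) :
    HasDerivAt (v (a • e)) (partialSnd (radialProfile v e) (a, b)) b :=
  (contDiffOn_radialProfile he hv).hasDerivAt_partialSnd (isOpen_Ioo.prod isOpen_Ioi) two_ne_zero
    (mk_mem_prod ha hb)

lemma deriv_deriv_eq_partialSnd_partialSnd (he : ‖e‖ = 1)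
    (hv : ContDiffOn ℝ 2 (fun p : Euc N × ℝ => v p.1 p.2) (ball 0 r ×ˢ Ioi 0))
    {a b : ℝ} (ha : a ∈ Ioo (-r) r) (hb : 0 < b) :
    deriv (deriv (v (a • e))) b = partialSnd (partialSnd (radialProfile v e)) (a, b) := by
  have hD : IsOpen (Ioo (-r) r ×ˢ Ioi (0 : ℝ)) := isOpen_Ioo.prod isOpen_Ioi
  have hderiv : deriv (v (a • e)) =ᶠ[𝓝 b] fun t => partialSnd (radialProfile v e) (a, t) :=
    (lt_mem_nhds hb).mono fun t ht => (hasDerivAt_radialProfile_snd he hv ha ht).deriv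
  rw [hderiv.deriv_eq]
  exact ((contDiffOn_partialSnd (m := 1) (contDiffOn_radialProfile he hv) hD
    (by norm_num)).hasDerivAt_partialSnd hD one_ne_zero (mk_mem_prod ha hb)).deriv

lemma lapx_smul_single (hN : 0 < N) (hrad : RadialDecr v)
    (hv : ContDiffOn ℝ 2 (fun p : Euc N × ℝ => v p.1 p.2) (ball 0 r ×ˢ Ioi 0))
    {i : Fin N} {ρ z : ℝ} (hρ : 0 < ρ) (hρr : ρ < r) (hz : 0 < z) :
    lapx v (ρ • EuclideanSpace.single i (1 : ℝ)) z =
      partialFst (partialFst (radialProfile v (EuclideanSpace.single i (1 : ℝ)))) (ρ, z) +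
        (N - 1) / ρ * partialFst (radialProfile v (EuclideanSpace.single i (1 : ℝ))) (ρ, z) := by
  set e : Euc N := EuclideanSpace.single i (1 : ℝ)
  have he : ‖e‖ = 1 := by simp [e]
  set u := radialProfile v e
  have hD : IsOpen (Ioo (-r) r ×ˢ Ioi (0 : ℝ)) := isOpen_Ioo.prod isOpen_Ioi
  have hu := contDiffOn_radialProfile he hv
  have hu₁ : ∀ᶠ c in 𝓝 ρ, HasDerivAt (fun c => u (c, z)) (partialFst u (c, z)) c :=
    eventually_of_mem (Ioo_mem_nhds (show -r < ρ by linarith) hρr) fun c hc =>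
      hu.hasDerivAt_partialFst hD two_ne_zero (mk_mem_prod hc hz)
  have hu₂ : HasDerivAt (fun c => partialFst u (c, z)) (partialFst (partialFst u) (ρ, z)) ρ :=
    (contDiffOn_partialFst (m := 1) hu hD (by norm_num)).hasDerivAt_partialFst hD one_ne_zero
      (mk_mem_prod ⟨by linarith, hρr⟩ hz)
  have hradial :
      deriv (deriv fun t : ℝ => v (ρ • e + t • e) z) 0 = partialFst (partialFst u) (ρ, z) := by
    have hshift : deriv (fun t : ℝ => v (ρ • e + t • e) z) =
        fun t => deriv (fun c => u (c, z)) (ρ + t) :=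
      funext fun t => by simp_rw [← add_smul]; exact deriv_comp_const_add (fun c => u (c, z)) ρ t
    have hderiv : deriv (fun c => u (c, z)) =ᶠ[𝓝 ρ] fun c => partialFst u (c, z) :=
      hu₁.mono fun c hc => hc.deriv
    rw [hshift, deriv_comp_const_add (deriv fun c => u (c, z)) ρ 0, add_zero, hderiv.deriv_eq,
      hu₂.deriv]
  have htangential : ∀ j ∈ ({i}ᶜ : Finset (Fin N)),
      deriv (deriv fun t : ℝ => v (ρ • e + t • EuclideanSpace.single j (1 : ℝ)) z) 0 =
        partialFst u (ρ, z) / ρ := by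
    intro j hj
    have hij : i ≠ j := fun h => by simp [h] at hj
    simp_rw [hrad.apply_eq_radialProfile he hz.le, e, norm_smul_single_add_smul_single hij]
    exact deriv_deriv_comp_sqrt_sq_add_sq hρ hu₁ hu₂
  rw [lapx, Fintype.sum_eq_add_sum_compl i, hradial, Finset.sum_congr rfl htangential,
    Finset.sum_const, Finset.card_compl, Finset.card_singleton, Fintype.card_fin, nsmul_eq_mul,
    Nat.cast_sub hN, Nat.cast_one]
  ring

lemma radialProfile_pde (hN : 0 < N) (hrad : RadialDecr v)
    (hv : ContDiffOn ℝ 2 (fun p : Euc N × ℝ => v p.1 p.2) (ball 0 r ×ˢ Ioi 0))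
    {a : ℝ → ℝ}
    (hpde : ∀ x ∈ ball 0 r, ∀ z > 0, a z * deriv (deriv (v x)) z + lapx v x z = 0)
    (i : Fin N) {ρ z : ℝ} (hρ : 0 < ρ) (hρr : ρ < r) (hz : 0 < z) :
    a z * partialSnd (partialSnd (radialProfile v (EuclideanSpace.single i (1 : ℝ)))) (ρ, z) +
      partialFst (partialFst (radialProfile v (EuclideanSpace.single i (1 : ℝ)))) (ρ, z) +
        (N - 1) / ρ * partialFst (radialProfile v (EuclideanSpace.single i (1 : ℝ))) (ρ, z) =
      0 := by
  have he : ‖(EuclideanSpace.single i (1 : ℝ) : Euc N)‖ = 1 := by simp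
  have hx : ρ • EuclideanSpace.single i (1 : ℝ) ∈ ball (0 : Euc N) r := by
    rwa [mem_ball_zero_iff, norm_smul_of_norm_eq_one he hρ.le]
  have h := hpde _ hx z hz
  rw [deriv_deriv_eq_partialSnd_partialSnd he hv ⟨by linarith, hρr⟩ hz,
    lapx_smul_single hN hrad hv hρ hρr hz] at h
  linear_combination h

end RadialProfile

section Concentration

variable {N : ℕ} {v : Euc N → ℝ → ℝ} {r : ℝ}

lemma RadialDecr.nonneg_of_eq_zero_on_frontier (hN : 0 < N) (hrad : RadialDecr v)
    (hzero : ∀ x ∈ frontier (ball (0 : Euc N) r), ∀ z ∈ Ici (0 : ℝ), v x z = 0) :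
    ∀ z > 0, ∀ x ∈ ball 0 r, 0 ≤ v x z := by
  intro z hz x hx
  have hr : 0 < r := (norm_nonneg x).trans_lt (mem_ball_zero_iff.1 hx)
  have he : ‖(EuclideanSpace.single ⟨0, hN⟩ (1 : ℝ) : Euc N)‖ = 1 := by simp
  have hre := norm_smul_of_norm_eq_one he hr.le
  have hfr : r • EuclideanSpace.single ⟨0, hN⟩ (1 : ℝ) ∈ frontier (ball (0 : Euc N) r) := by
    rw [frontier_ball 0 hr.ne', mem_sphere_zero_iff_norm, hre]
  calc 0 = v (r • EuclideanSpace.single ⟨0, hN⟩ (1 : ℝ)) z := (hzero _ hfr z hz.le).symm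
    _ ≤ v x z := hrad z hz.le _ _ (by rw [hre]; exact (mem_ball_zero_iff.1 hx).le)

lemma integral_rearr_ball_eq_integral_radialProfile (hN : 0 < N)
    (hv : ContDiffOn ℝ 2 (fun p : Euc N × ℝ => v p.1 p.2) (ball 0 r ×ˢ Ioi 0))
    (hrad : RadialDecr v) {e : Euc N} (he : ‖e‖ = 1) {s z : ℝ} (hs : 0 ≤ s)
    (hsr : volRadius N s < r) (hz : 0 < z) (hnonneg : ∀ x ∈ ball 0 r, 0 ≤ v x z) :
    ∫ σ in 0..s, rearr (ball 0 r) (fun x => v x z) σ =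
      ∫ σ in 0..s, radialProfile v e (volRadius N σ, z) := by
  have hcont : ContinuousOn (fun x => v x z) (ball 0 r) :=
    hv.continuousOn.comp (Continuous.prodMk_left z).continuousOn fun x hx => mk_mem_prod hx hz
  refine intervalIntegral.integral_congr fun σ hσ => ?_
  rw [uIcc_of_le hs] at hσ
  have hρ := mapsTo_volRadius_Ioo hN hsr hσ
  have h :=
    rearr_ball_of_radial hN (hrad z hz.le) hcont hnonneg he (volRadius_nonneg hN hσ.1) hρ.2
  rwa [omegaN_mul_volRadius_pow hN hσ.1] at h

lemma eventuallyEq_integral_rearr_ball_snd (hN : 0 < N)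
    (hv : ContDiffOn ℝ 2 (fun p : Euc N × ℝ => v p.1 p.2) (ball 0 r ×ˢ Ioi 0))
    (hrad : RadialDecr v) (hnonneg : ∀ z > 0, ∀ x ∈ ball 0 r, 0 ≤ v x z)
    {e : Euc N} (he : ‖e‖ = 1) {s z : ℝ} (hs : 0 ≤ s) (hsr : volRadius N s < r)
    (hz : 0 < z) :
    (fun z' => ∫ σ in 0..s, rearr (ball 0 r) (fun x => v x z') σ) =ᶠ[𝓝 z]
      fun z' => ∫ σ in 0..s, radialProfile v e (volRadius N σ, z') :=
  (lt_mem_nhds hz).mono fun z' hz' => integral_rearr_ball_eq_integral_radialProfile hN hv hrad he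
    hs hsr hz' (hnonneg z' hz')

lemma eventuallyEq_integral_rearr_ball_fst (hN : 0 < N)
    (hv : ContDiffOn ℝ 2 (fun p : Euc N × ℝ => v p.1 p.2) (ball 0 r ×ˢ Ioi 0))
    (hrad : RadialDecr v) {e : Euc N} (he : ‖e‖ = 1) {s z : ℝ} (hs : 0 < s)
    (hsr : volRadius N s < r) (hz : 0 < z) (hnonneg : ∀ x ∈ ball 0 r, 0 ≤ v x z) :
    (fun s' => ∫ σ in 0..s', rearr (ball 0 r) (fun x => v x z) σ) =ᶠ[𝓝 s]
      fun s' => ∫ σ in 0..s', radialProfile v e (volRadius N σ, z) :=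
  ((lt_mem_nhds hs).and ((continuous_volRadius hN).continuousAt.eventually (gt_mem_nhds hsr))).mono
    fun _ hs' => integral_rearr_ball_eq_integral_radialProfile hN hv hrad he hs'.1.le hs'.2 hz
      hnonneg

lemma integral_partialSnd_partialSnd_radialProfile (hN : 2 ≤ N) (hrad : RadialDecr v)
    (hv : ContDiffOn ℝ 2 (fun p : Euc N × ℝ => v p.1 p.2) (ball 0 r ×ˢ Ioi 0)) {a : ℝ → ℝ}
    (hpde : ∀ x ∈ ball 0 r, ∀ z > 0, a z * deriv (deriv (v x)) z + lapx v x z = 0)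
    (i : Fin N) {s z : ℝ} (hs : 0 < s) (hsr : volRadius N s < r) (hz : 0 < z) :
    a z * ∫ σ in 0..s, partialSnd (partialSnd (radialProfile v (EuclideanSpace.single i 1)))
      (volRadius N σ, z) = -(ballPerimeter N s *
        partialFst (radialProfile v (EuclideanSpace.single i 1)) (volRadius N s, z)) := by
  have hN0 : 0 < N := by omega
  set u := radialProfile v (EuclideanSpace.single i (1 : ℝ))
  have hD : IsOpen (Ioo (-r) r ×ˢ Ioi (0 : ℝ)) := isOpen_Ioo.prod isOpen_Ioi
  have hu : ContDiffOn ℝ 2 u (Ioo (-r) r ×ˢ Ioi 0) := contDiffOn_radialProfile (by simp) hv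
  have hu₁ : ContDiffOn ℝ 1 (partialFst u) (Ioo (-r) r ×ˢ Ioi 0) :=
    contDiffOn_partialFst hu hD (by norm_num)
  have hu₂₂ : ContinuousOn (partialSnd (partialSnd u)) (Ioo (-r) r ×ˢ Ioi 0) :=
    (contDiffOn_partialSnd (m := 0) (contDiffOn_partialSnd (m := 1) hu hD (by norm_num)) hD
      (by norm_num)).continuousOn
  have hIcc : Icc 0 (volRadius N s) ⊆ Ioo (-r) r := fun c hc =>
    ⟨by linarith [hc.1, volRadius_pos hN0 hs], hc.2.trans_lt hsr⟩
  have hflux := integral_eq_ballPerimeter_mul_of_radial hN hs.le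
    (w' := fun c => partialFst u (c, z)) (w'' := fun c => partialFst (partialFst u) (c, z))
    (g := fun σ => -(a z * partialSnd (partialSnd u) (volRadius N σ, z)))
    (hu₁.continuousOn.comp_prodMk_const continuousOn_id hIcc hz)
    (fun c hc => hu₁.hasDerivAt_partialFst hD one_ne_zero
      (mk_mem_prod (hIcc (Ioo_subset_Icc_self hc)) hz))
    ((continuousOn_const.mul (hu₂₂.comp_prodMk_const (continuous_volRadius hN0).continuousOn
      (mapsTo_volRadius_Ioo hN0 hsr) hz)).neg.intervalIntegrable_of_Icc hs.le)
    (fun σ hσ => by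
      have := radialProfile_pde hN0 hrad hv hpde i (volRadius_pos hN0 hσ.1)
        (mapsTo_volRadius_Ioo hN0 hsr (Ioo_subset_Icc_self hσ)).2 hz
      linear_combination -this)
  rw [intervalIntegral.integral_neg, intervalIntegral.integral_const_mul] at hflux
  exact neg_eq_iff_eq_neg.1 hflux

theorem concentration_pde (hN : 2 ≤ N)
    (hv : ContDiffOn ℝ 2 (fun p : Euc N × ℝ => v p.1 p.2) (ball 0 r ×ˢ Ioi 0))
    (hrad : RadialDecr v) (hnonneg : ∀ z > 0, ∀ x ∈ ball 0 r, 0 ≤ v x z) {a : ℝ → ℝ}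
    (hpde : ∀ x ∈ ball 0 r, ∀ z > 0, a z * deriv (deriv (v x)) z + lapx v x z = 0)
    {s z : ℝ} (hs : 0 < s) (hsr : volRadius N s < r) (hz : 0 < z) :
    a z * deriv (deriv fun z' => ∫ σ in 0..s, rearr (ball 0 r) (fun x => v x z') σ) z +
      N ^ 2 * omegaN N ^ (2 / (N : ℝ)) * s ^ (2 - 2 / (N : ℝ)) *
        deriv (deriv fun s' => ∫ σ in 0..s', rearr (ball 0 r) (fun x => v x z) σ) s =
      0 := by
  have hN0 : 0 < N := by omega
  have he : ‖(EuclideanSpace.single ⟨0, hN0⟩ (1 : ℝ) : Euc N)‖ = 1 := by simp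
  set u := radialProfile v (EuclideanSpace.single ⟨0, hN0⟩ (1 : ℝ))
  have hu : ContDiffOn ℝ 2 u (Ioo (-r) r ×ˢ Ioi 0) := contDiffOn_radialProfile he hv
  have hρs : volRadius N s ∈ Ioo (-r) r := mapsTo_volRadius_Ioo hN0 hsr ⟨hs.le, le_rfl⟩
  rw [(eventuallyEq_integral_rearr_ball_snd hN0 hv hrad hnonneg he hs.le hsr hz).deriv.deriv_eq,
    (eventuallyEq_integral_rearr_ball_fst hN0 hv hrad he hs hsr hz (hnonneg z hz)).deriv.deriv_eq,
    deriv_deriv_integral_volRadius_snd hN0 hu hs.le hsr hz,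
    integral_partialSnd_partialSnd_radialProfile hN hrad hv hpde ⟨0, hN0⟩ hs hsr hz,
    deriv_deriv_integral_comp_volRadius hN0 (w := fun c => u (c, z))
      (hu.continuousOn.comp_prodMk_const continuousOn_id (mapsTo_id _) hz)
      (hu.hasDerivAt_partialFst (isOpen_Ioo.prod isOpen_Ioi) two_ne_zero (mk_mem_prod hρs hz))
      hs hsr,
    ← ballPerimeter_sq hN0 hs]
  have hP := (ballPerimeter_pos hN0 hs).ne'
  field_simp
  ring

theorem tendsto_deriv_integral_rearr_ball (hN : 0 < N)
    (hv : ContDiffOn ℝ 2 (fun p : Euc N × ℝ => v p.1 p.2) (ball 0 r ×ˢ Ioi 0))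
    (hrad : RadialDecr v) (hnonneg : ∀ z > 0, ∀ x ∈ ball 0 r, 0 ≤ v x z) {ψ : ℝ → ℝ}
    (hlim : ∀ ε > (0 : ℝ), ∃ δ > (0 : ℝ), ∀ z ∈ Ioo (0 : ℝ) δ, ∀ x ∈ ball 0 r,
      |deriv (v x) z + ψ (omegaN N * ‖x‖ ^ N)| < ε)
    {s : ℝ} (hs : 0 ≤ s) (hsr : volRadius N s < r) :
    Tendsto
      (fun z => deriv (fun z' => ∫ σ in 0..s, rearr (ball 0 r) (fun x => v x z') σ) z)
      (𝓝[>] 0) (𝓝 (-∫ σ in 0..s, ψ σ)) := by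
  have he : ‖(EuclideanSpace.single ⟨0, hN⟩ (1 : ℝ) : Euc N)‖ = 1 := by simp
  set u := radialProfile v (EuclideanSpace.single ⟨0, hN⟩ (1 : ℝ))
  have hD : IsOpen (Ioo (-r) r ×ˢ Ioi (0 : ℝ)) := isOpen_Ioo.prod isOpen_Ioi
  have hu : ContDiffOn ℝ 2 u (Ioo (-r) r ×ˢ Ioi 0) := contDiffOn_radialProfile he hv
  have hmem := mapsTo_volRadius_Ioo hN hsr
  have hderiv : ∀ z ∈ Ioi (0 : ℝ),
      deriv (fun z' => ∫ σ in 0..s, rearr (ball 0 r) (fun x => v x z') σ) z =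
        ∫ σ in 0..s, partialSnd u (volRadius N σ, z) := fun z hz =>
    (eventuallyEq_integral_rearr_ball_snd hN hv hrad hnonneg he hs hsr hz).deriv_eq.trans
      (hasDerivAt_integral_volRadius_snd hN (hu.of_le (by norm_num)) hs hsr hz).deriv
  have hunif : TendstoUniformlyOn (fun z σ => partialSnd u (volRadius N σ, z)) (fun σ => -ψ σ)
      (𝓝[>] (0 : ℝ)) (uIcc 0 s) := by
    rw [uIcc_of_le hs]
    refine Metric.tendstoUniformlyOn_iff.2 fun ε hε => ?_
    obtain ⟨δ, hδ, hlimδ⟩ := hlim ε hε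
    filter_upwards [Ioo_mem_nhdsGT hδ] with z hz σ hσ
    have hx : volRadius N σ • EuclideanSpace.single ⟨0, hN⟩ (1 : ℝ) ∈ ball (0 : Euc N) r := by
      rw [mem_ball_zero_iff, norm_smul_of_norm_eq_one he (volRadius_nonneg hN hσ.1)]
      exact (hmem hσ).2
    have h := hlimδ z hz _ hx
    rw [norm_smul_of_norm_eq_one he (volRadius_nonneg hN hσ.1), omegaN_mul_volRadius_pow hN hσ.1,
      (hasDerivAt_radialProfile_snd he hv (hmem hσ) hz.1).deriv] at h
    rwa [Real.dist_eq, abs_sub_comm, sub_neg_eq_add]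
  have hcont : ∀ z ∈ Ioi (0 : ℝ),
      ContinuousOn (fun σ => partialSnd u (volRadius N σ, z)) (uIcc 0 s) :=
    fun z hz => by
      rw [uIcc_of_le hs]
      exact (contDiffOn_partialSnd (m := 0) hu hD (by norm_num)).continuousOn.comp_prodMk_const
        (continuous_volRadius hN).continuousOn hmem hz
  have htend := hunif.tendsto_intervalIntegral_of_continuousOn (μ := volume)
    (eventually_nhdsWithin_of_forall hcont)
  rw [intervalIntegral.integral_neg] at htend
  exact htend.congr' (eventually_nhdsWithin_of_forall fun z hz => (hderiv z hz).symm)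

end Concentration

theorem radial_concentration_equation_general
    {N : ℕ} (hN : 2 ≤ N) (α : ℝ)
    (Ω : Set (Euc N))
    (f : Euc N → ℝ)
    (v : Euc N → ℝ → ℝ)
    (hC2 : ContDiffOn ℝ 2 (fun p : Euc N × ℝ => v p.1 p.2) (symmBall Ω ×ˢ Ioi (0 : ℝ)))
    (hrad : RadialDecr v)
    (hpde : ∀ x ∈ symmBall Ω, ∀ z ∈ Ioi (0 : ℝ),
      z ^ (2 * (α - 1) / α) * deriv (deriv (v x)) z + lapx v x z = 0)
    (hlateral : ∀ x ∈ frontier (symmBall Ω), ∀ z ∈ Ici (0 : ℝ), v x z = 0) :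
    (∀ s ∈ Ioo (0 : ℝ) (volume Ω).toReal, ∀ z ∈ Ioi (0 : ℝ),
      z ^ (2 * (α - 1) / α) *
          deriv (deriv fun z' : ℝ =>
            ∫ σ in (0 : ℝ)..s, rearr (symmBall Ω) (fun x => v x z') σ) z +
        (N : ℝ) ^ 2 * omegaN N ^ (2 / (N : ℝ)) * s ^ (2 - 2 / (N : ℝ)) *
          deriv (deriv fun s' : ℝ =>
            ∫ σ in (0 : ℝ)..s', rearr (symmBall Ω) (fun x => v x z) σ) s = 0) ∧
    ((∀ ε > (0 : ℝ), ∃ δ > (0 : ℝ), ∀ z ∈ Ioo (0 : ℝ) δ, ∀ x ∈ symmBall Ω,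
        |deriv (v x) z + α ^ (α - 1) * kappa α * schwarz Ω f x| < ε) →
      ∀ s ∈ Ioo (0 : ℝ) (volume Ω).toReal,
        Tendsto (fun z : ℝ =>
            deriv (fun z' : ℝ =>
              ∫ σ in (0 : ℝ)..s, rearr (symmBall Ω) (fun x => v x z') σ) z)
          (nhdsWithin 0 (Ioi 0))
          (nhds (-(α ^ (α - 1) * kappa α * ∫ σ in (0 : ℝ)..s, rearr Ω f σ)))) := by
  have hN0 : 0 < N := by omega
  have hsr : ∀ s ∈ Ioo (0 : ℝ) (volume Ω).toReal, volRadius N s < ballRad Ω := fun s hs =>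
    volRadius_lt_volRadius hN0 hs.1.le hs.2
  have hnonneg := hrad.nonneg_of_eq_zero_on_frontier hN0 hlateral
  refine ⟨fun s hs z hz => concentration_pde hN hC2 hrad hnonneg
    (a := fun z => z ^ (2 * (α - 1) / α)) hpde hs.1 (hsr s hs) hz, fun hlim s hs => ?_⟩
  rw [← intervalIntegral.integral_const_mul]
  exact tendsto_deriv_integral_rearr_ball hN0 hC2 hrad hnonneg
    (ψ := fun σ => α ^ (α - 1) * kappa α * rearr Ω f σ) hlim hs.1.le (hsr s hs)

/-- for a radial, radially nonincreasing solution `v` of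
`z^β ∂²_z v + Δ_x v = 0` on `C_{Ω^#}`, the concentration `V(s,z) = ∫_0^s v*(σ,z) dσ`
satisfies `z^β ∂²V/∂z² + N² ω_N^{2/N} s^{2-2/N} ∂²V/∂s² = 0`; moreover, if
`∂_z v(·,z) → -α^{α-1} κ_α f^#` uniformly as `z → 0⁺`, then
`∂V/∂z(s,z) → -α^{α-1} κ_α ∫_0^s f*(σ) dσ` as `z → 0⁺`. -/
theorem radial_concentration_equation
    {N : ℕ} (hN : 2 ≤ N) (α : ℝ) (hα : α ∈ Ioo (0 : ℝ) 2)
    (Ω : Set (Euc N)) (hΩo : IsOpen Ω) (hΩb : Bornology.IsBounded Ω)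
    (f : Euc N → ℝ) (hf : Measurable f)
    (v : Euc N → ℝ → ℝ)
    (hC2 : ContDiffOn ℝ 2 (fun p : Euc N × ℝ => v p.1 p.2) (symmBall Ω ×ˢ Ioi (0 : ℝ)))
    (hcont : ContinuousOn (fun p : Euc N × ℝ => v p.1 p.2)
      (closure (symmBall Ω ×ˢ Ioi (0 : ℝ))))
    (hrad : RadialDecr v)
    (hpde : ∀ x ∈ symmBall Ω, ∀ z ∈ Ioi (0 : ℝ),
      z ^ (2 * (α - 1) / α) * deriv (deriv (v x)) z + lapx v x z = 0)
    (hlateral : ∀ x ∈ frontier (symmBall Ω), ∀ z ∈ Ici (0 : ℝ), v x z = 0) :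
    (∀ s ∈ Ioo (0 : ℝ) (volume Ω).toReal, ∀ z ∈ Ioi (0 : ℝ),
      z ^ (2 * (α - 1) / α) *
          deriv (deriv fun z' : ℝ =>
            ∫ σ in (0 : ℝ)..s, rearr (symmBall Ω) (fun x => v x z') σ) z +
        (N : ℝ) ^ 2 * omegaN N ^ (2 / (N : ℝ)) * s ^ (2 - 2 / (N : ℝ)) *
          deriv (deriv fun s' : ℝ =>
            ∫ σ in (0 : ℝ)..s', rearr (symmBall Ω) (fun x => v x z) σ) s = 0) ∧
    ((∀ ε > (0 : ℝ), ∃ δ > (0 : ℝ), ∀ z ∈ Ioo (0 : ℝ) δ, ∀ x ∈ symmBall Ω,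
        |deriv (v x) z + α ^ (α - 1) * kappa α * schwarz Ω f x| < ε) →
      ∀ s ∈ Ioo (0 : ℝ) (volume Ω).toReal,
        Tendsto (fun z : ℝ =>
            deriv (fun z' : ℝ =>
              ∫ σ in (0 : ℝ)..s, rearr (symmBall Ω) (fun x => v x z') σ) z)
          (nhdsWithin 0 (Ioi 0))
          (nhds (-(α ^ (α - 1) * kappa α * ∫ σ in (0 : ℝ)..s, rearr Ω f σ)))) :=
  radial_concentration_equation_general hN α Ω f v hC2 hrad hpde hlateral
end
end

section
/- Let p > 3 and p' := p/(p−1). Define φ(s) := (3/(4π))^{1/3} ((4π/3)^{2/3} − s^{2/3})^{1/2} for s ∈ (0, 4π/3). Then (1/(2π²)) (4π/3)^{2/3} ( ∫_0^{4π/3} s^{−2p'/3} φ(s)^{p'} ds )^{1/p'} = ( (2π)^{1/p'} / (2π²) ) · B( (p−3)/(2(p−1)), (3p−2)/(2(p−1)) )^{(p−1)/p}, where B denotes the Euler beta function B(x,y) = ∫_0^1 t^{x−1}(1−t)^{y−1} dt. -/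
open Filter Set Real

noncomputable section

/-- The Euler beta function `B(x,y) = ∫_0^1 t^{x-1} (1-t)^{y-1} dt`. -/
def betaFn (x y : ℝ) : ℝ := ∫ t in (0 : ℝ)..1, t ^ (x - 1) * (1 - t) ^ (y - 1)

/-- explicit computation of the best constant in the `L^∞` estimate for the
square root of the Laplacian on the unit ball of `ℝ³`: for `p > 3` and `p' = p/(p-1)`,
`(1/(2π²)) (4π/3)^{2/3} (∫_0^{4π/3} s^{-2p'/3} φ(s)^{p'} ds)^{1/p'}
  = ((2π)^{1/p'}/(2π²)) B((p-3)/(2(p-1)), (3p-2)/(2(p-1)))^{(p-1)/p}`,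
where `φ(s) = (3/(4π))^{1/3} ((4π/3)^{2/3} - s^{2/3})^{1/2}`. -/
theorem best_constant_half_laplacian_ball (p : ℝ) (hp : 3 < p) :
    (1 / (2 * π ^ 2)) * (4 * π / 3) ^ ((2 : ℝ) / 3) *
      (∫ s in (0 : ℝ)..(4 * π / 3),
          s ^ (-(2 * (p / (p - 1))) / 3) *
            ((3 / (4 * π)) ^ ((1 : ℝ) / 3) *
              ((4 * π / 3) ^ ((2 : ℝ) / 3) - s ^ ((2 : ℝ) / 3)) ^ ((1 : ℝ) / 2)) ^
              (p / (p - 1))) ^ ((p - 1) / p) =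
    (2 * π) ^ ((p - 1) / p) / (2 * π ^ 2) *
      betaFn ((p - 3) / (2 * (p - 1))) ((3 * p - 2) / (2 * (p - 1))) ^ ((p - 1) / p) := by
  have hπ : (0:ℝ) < π := pi_pos
  have hp1 : (0:ℝ) < p - 1 := by linarith
  have hp0 : (0:ℝ) < p := by linarith
  set q : ℝ := p / (p - 1) with hq
  have hq1 : 1 < q := (one_lt_div hp1).2 (by linarith)
  set c : ℝ := 4 * π / 3 with hc_def
  have hc : (0:ℝ) < c := by rw [hc_def]; positivity
  -- the change-of-variables map
  set f : ℝ → ℝ := fun u => c * u ^ ((3:ℝ)/2) with hf_def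
  have himg : f '' Ioo 0 1 = Ioo 0 c := by
    ext s
    constructor
    · rintro ⟨u, ⟨hu0, hu1⟩, rfl⟩
      refine ⟨mul_pos hc (Real.rpow_pos_of_pos hu0 _), ?_⟩
      have h1 : u ^ ((3:ℝ)/2) < 1 := Real.rpow_lt_one hu0.le hu1 (by norm_num)
      have := mul_lt_mul_of_pos_left h1 hc
      simpa [hf_def] using this
    · rintro ⟨hs0, hsc⟩
      refine ⟨(s / c) ^ ((2:ℝ)/3), ⟨Real.rpow_pos_of_pos (div_pos hs0 hc) _,
        Real.rpow_lt_one (by positivity) ((div_lt_one hc).2 hsc) (by norm_num)⟩, ?_⟩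
      show c * ((s / c) ^ ((2:ℝ)/3)) ^ ((3:ℝ)/2) = s
      rw [← Real.rpow_mul (div_nonneg hs0.le hc.le),
        show (2:ℝ)/3 * ((3:ℝ)/2) = 1 by norm_num, Real.rpow_one]
      field_simp
  have hinj : InjOn f (Ioo 0 1) := by
    intro a ha b hb h
    have h' : a ^ ((3:ℝ)/2) = b ^ ((3:ℝ)/2) := mul_left_cancel₀ hc.ne' h
    have ea : (a ^ ((3:ℝ)/2)) ^ ((2:ℝ)/3) = a := by
      rw [← Real.rpow_mul ha.1.le]; norm_num
    have eb : (b ^ ((3:ℝ)/2)) ^ ((2:ℝ)/3) = b := by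
      rw [← Real.rpow_mul hb.1.le]; norm_num
    rw [← ea, ← eb, h']
  have hderiv : ∀ u ∈ Ioo (0:ℝ) 1,
      HasDerivWithinAt f (c * ((3:ℝ)/2 * u ^ ((1:ℝ)/2))) (Ioo 0 1) u := by
    intro u hu
    have h := (Real.hasDerivAt_rpow_const (p := (3:ℝ)/2) (Or.inl hu.1.ne')).const_mul c
    have h2 : (3:ℝ)/2 - 1 = (1:ℝ)/2 := by norm_num
    rw [h2] at h
    exact h.hasDerivWithinAt
  -- exponent identities
  have hx : (p - 3) / (2 * (p - 1)) - 1 = 1/2 - q := by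
    rw [hq]; field_simp; ring
  have hy : (3 * p - 2) / (2 * (p - 1)) - 1 = 1/2 * q := by
    rw [hq]; field_simp; ring
  -- the key integral computation
  have key : (∫ s in (0:ℝ)..c,
          s ^ (-(2 * q) / 3) *
            ((3 / (4 * π)) ^ ((1 : ℝ) / 3) *
              (c ^ ((2 : ℝ) / 3) - s ^ ((2 : ℝ) / 3)) ^ ((1 : ℝ) / 2)) ^ q) =
      2 * π * c ^ (-(2 * q) / 3) *
        betaFn ((p - 3) / (2 * (p - 1))) ((3 * p - 2) / (2 * (p - 1))) := by
    have hbeta : betaFn ((p - 3) / (2 * (p - 1))) ((3 * p - 2) / (2 * (p - 1))) =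
        ∫ t in Ioo (0:ℝ) 1, t ^ ((p - 3) / (2 * (p - 1)) - 1) *
          (1 - t) ^ ((3 * p - 2) / (2 * (p - 1)) - 1) := by
      rw [betaFn, intervalIntegral.integral_of_le zero_le_one,
        MeasureTheory.integral_Ioc_eq_integral_Ioo]
    rw [intervalIntegral.integral_of_le hc.le, MeasureTheory.integral_Ioc_eq_integral_Ioo,
      ← himg, MeasureTheory.integral_image_eq_integral_abs_deriv_smul measurableSet_Ioo
        hderiv hinj, hbeta, ← MeasureTheory.integral_const_mul]
    apply MeasureTheory.setIntegral_congr_fun measurableSet_Ioo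
    intro u hu
    obtain ⟨hu0, hu1⟩ := hu
    have h1u : (0:ℝ) ≤ 1 - u := by linarith
    simp only [smul_eq_mul]
    rw [abs_of_nonneg (mul_nonneg hc.le
      (mul_nonneg (by norm_num) (Real.rpow_nonneg hu0.le _)))]
    show c * ((3:ℝ)/2 * u ^ ((1:ℝ)/2)) *
        ((c * u ^ ((3:ℝ)/2)) ^ (-(2 * q) / 3) *
          ((3 / (4 * π)) ^ ((1 : ℝ) / 3) *
            (c ^ ((2 : ℝ) / 3) - (c * u ^ ((3:ℝ)/2)) ^ ((2 : ℝ) / 3)) ^ ((1 : ℝ) / 2)) ^ q) =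
      2 * π * c ^ (-(2 * q) / 3) *
        (u ^ ((p - 3) / (2 * (p - 1)) - 1) * (1 - u) ^ ((3 * p - 2) / (2 * (p - 1)) - 1))
    have e1 : (c * u ^ ((3:ℝ)/2)) ^ (-(2 * q) / 3) = c ^ (-(2 * q) / 3) * u ^ (-q) := by
      rw [Real.mul_rpow hc.le (Real.rpow_nonneg hu0.le _), ← Real.rpow_mul hu0.le,
        show (3:ℝ)/2 * (-(2 * q) / 3) = -q by ring]
    have e2 : (c * u ^ ((3:ℝ)/2)) ^ ((2:ℝ)/3) = c ^ ((2:ℝ)/3) * u := by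
      rw [Real.mul_rpow hc.le (Real.rpow_nonneg hu0.le _), ← Real.rpow_mul hu0.le,
        show (3:ℝ)/2 * ((2:ℝ)/3) = 1 by norm_num, Real.rpow_one]
    have e4 : (c ^ ((2:ℝ)/3) * (1 - u)) ^ ((1:ℝ)/2)
        = c ^ ((1:ℝ)/3) * (1 - u) ^ ((1:ℝ)/2) := by
      rw [Real.mul_rpow (Real.rpow_nonneg hc.le _) h1u, ← Real.rpow_mul hc.le,
        show (2:ℝ)/3 * ((1:ℝ)/2) = (1:ℝ)/3 by norm_num]
    have e5 : ((3:ℝ) / (4 * π)) ^ ((1:ℝ)/3) = c ^ (-((1:ℝ)/3)) := by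
      have h45 : (3:ℝ) / (4 * π) = c⁻¹ := by rw [hc_def]; exact (inv_div _ _).symm
      rw [h45, Real.inv_rpow hc.le, ← Real.rpow_neg hc.le]
    have e6 : c ^ (-((1:ℝ)/3)) * (c ^ ((1:ℝ)/3) * (1 - u) ^ ((1:ℝ)/2))
        = (1 - u) ^ ((1:ℝ)/2) := by
      rw [← mul_assoc, ← Real.rpow_add hc,
        show -((1:ℝ)/3) + (1:ℝ)/3 = 0 by ring, Real.rpow_zero, one_mul]
    have e7 : ((1 - u) ^ ((1:ℝ)/2)) ^ q = (1 - u) ^ ((1:ℝ)/2 * q) :=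
      (Real.rpow_mul h1u _ _).symm
    rw [e1, e2, show c ^ ((2:ℝ)/3) - c ^ ((2:ℝ)/3) * u = c ^ ((2:ℝ)/3) * (1 - u) by ring,
      e4, e5, e6, e7, hx, hy,
      show (1:ℝ)/2 - q = 1/2 + -q by ring, Real.rpow_add' hu0.le
        (show (1:ℝ)/2 + -q ≠ 0 from ne_of_lt (by linarith))]
    rw [hc_def]; ring
  rw [key]
  have hB : 0 ≤ betaFn ((p - 3) / (2 * (p - 1))) ((3 * p - 2) / (2 * (p - 1))) := by
    apply intervalIntegral.integral_nonneg (by norm_num)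
    intro t ht
    exact mul_nonneg (Real.rpow_nonneg ht.1 _) (Real.rpow_nonneg (by linarith [ht.2]) _)
  rw [Real.mul_rpow (mul_nonneg (by positivity) (Real.rpow_nonneg hc.le _)) hB,
    Real.mul_rpow (by positivity) (Real.rpow_nonneg hc.le _),
    ← Real.rpow_mul hc.le]
  have hqr : -(2 * q) / 3 * ((p - 1) / p) = -((2:ℝ)/3) := by
    rw [hq]; field_simp
  rw [hqr]
  have hcc : c ^ ((2:ℝ)/3) * c ^ (-((2:ℝ)/3)) = 1 := by
    rw [← Real.rpow_add hc, show (2:ℝ)/3 + -((2:ℝ)/3) = 0 by ring, Real.rpow_zero]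
  linear_combination ((2*π) ^ ((p-1)/p) *
    betaFn ((p - 3) / (2 * (p - 1))) ((3 * p - 2) / (2 * (p - 1))) ^ ((p-1)/p) / (2*π^2)) * hcc
end
end
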